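/- The commutator subgroup [W(E), W(E)] is abelian if and only if for every vertex j ∈ {1,…,d} there exists at most one vertex i ≠ j with ¬E i j (i.e. every vertex has at most one non-neighbour in the graph E). -/

import Mathlib

/-- Relators of the right-angled Coxeter group of the graph `E`:
`s j ^ 2` for every vertex `j`, and `(s i * s j) ^ 2` for every edge `{i, j}` of `E`. -/
def racgRels {d : ℕ} (E : Fin d → Fin d → Prop) : Set (FreeGroup (Fin d)) :=
  {r | (∃ j : Fin d, r = FreeGroup.of j ^ 2) ∨
    ∃ i j : Fin d, E i j ∧ r = (FreeGroup.of i * FreeGroup.of j) ^ 2}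

/-- The right-angled Coxeter group `W(E)` of the graph `E`. -/
abbrev RACG {d : ℕ} (E : Fin d → Fin d → Prop) : Type := PresentedGroup (racgRels E)

/-- The standard generator `s j` of the right-angled Coxeter group `W(E)`. -/
def racgGen {d : ℕ} (E : Fin d → Fin d → Prop) (j : Fin d) : RACG E :=
  PresentedGroup.of j

/-!
If every vertex has at most one non-neighbour, each generator `s i` fails to commute with at most
one other generator. Then the commutators `⁅s i, s j⁆` pairwise commute, and conjugating one of
them by a generator gives another one, so they generate an abelian normal subgroup `N`. The
generators commute modulo `N`, hence `[W, W] ≤ N`.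

Conversely, if `j` has two non-neighbours `i ≠ k`, sending `s i, s j, s k` to the transpositions
`(2 3), (1 2), (0 1)` of `Fin 4` and every other generator to `1` respects the relations, and
turns `⁅s i, s j⁆` and `⁅s k, s j⁆` into two non-commuting 3-cycles.
-/

open scoped commutatorElement

section InvolutiveGenerators

open Subgroup

variable {G : Type*} [Group G]

theorem Subgroup.normal_closure_of_conj_mem {X S : Set G} (hX : closure X = ⊤)
    (hXinv : ∀ x ∈ X, x⁻¹ ∈ X) (hconj : ∀ x ∈ X, ∀ s ∈ S, x * s * x⁻¹ ∈ closure S) :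
    (closure S).Normal := by
  have hle : ∀ x ∈ X, (closure S).map (MulAut.conj x).toMonoidHom ≤ closure S := by
    intro x hx
    rw [MonoidHom.map_closure, closure_le]
    rintro _ ⟨s, hs, rfl⟩
    exact hconj x hx s hs
  rw [← normalizer_eq_top_iff, eq_top_iff, ← hX, closure_le]
  intro x hx
  rw [SetLike.mem_coe, mem_normalizer_iff_map_conj_eq]
  refine le_antisymm (hle x hx) fun s hs => ⟨x⁻¹ * s * x, ?_, by simp [mul_assoc]⟩
  simpa using hle x⁻¹ (hXinv x hx) (mem_map_of_mem _ hs)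

theorem commutator_le_of_closure_eq_top {X : Set G} (hX : closure X = ⊤) (N : Subgroup G)
    [N.Normal] (h : ∀ x ∈ X, ∀ y ∈ X, ⁅x, y⁆ ∈ N) : commutator G ≤ N := by
  have hsurj := QuotientGroup.mk'_surjective N
  have hcomm : IsMulCommutative (closure (QuotientGroup.mk' N '' X)) := by
    refine isMulCommutative_closure ?_
    rintro _ ⟨x, hx, rfl⟩ _ ⟨y, hy, rfl⟩
    rw [← commutatorElement_eq_one_iff_mul_comm, ← map_commutatorElement]
    exact (QuotientGroup.eq_one_iff _).mpr (h x hx y hy)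
  rw [← MonoidHom.map_closure, hX, ← MonoidHom.range_eq_map,
    MonoidHom.range_eq_top_of_surjective _ hsurj, ← commutator_self_eq_bot_iff] at hcomm
  rw [commutator_def, ← QuotientGroup.ker_mk' N, ← Subgroup.map_eq_bot_iff, map_commutator,
    ← MonoidHom.range_eq_map, MonoidHom.range_eq_top_of_surjective _ hsurj]
  exact hcomm

theorem inv_eq_self_of_sq_eq_one {x : G} (hx : x ^ 2 = 1) : x⁻¹ = x :=
  inv_eq_of_mul_eq_one_right (sq x ▸ hx)

theorem commute_of_sq_eq_one {x y : G} (hx : x ^ 2 = 1) (hy : y ^ 2 = 1)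
    (hxy : (x * y) ^ 2 = 1) : Commute x y := by
  have h := inv_eq_self_of_sq_eq_one hxy
  rwa [mul_inv_rev, inv_eq_self_of_sq_eq_one hx, inv_eq_self_of_sq_eq_one hy, eq_comm] at h

theorem conj_commutatorElement_left_of_sq_eq_one {x : G} (hx : x ^ 2 = 1) (y : G) :
    x * ⁅x, y⁆ * x⁻¹ = ⁅y, x⁆ := by
  simp only [commutatorElement_def, inv_eq_self_of_sq_eq_one hx, ← mul_assoc, ← sq, hx, one_mul]

theorem conj_commutatorElement_right_of_sq_eq_one (x : G) {y : G} (hy : y ^ 2 = 1) :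
    y * ⁅x, y⁆ * y⁻¹ = ⁅y, x⁆ := by
  simp only [commutatorElement_def, inv_eq_self_of_sq_eq_one hy, mul_assoc, ← sq, hy, mul_one]

theorem Commute.commutatorElement_left {a b c : G} (ha : Commute a c) (hb : Commute b c) :
    Commute ⁅a, b⁆ c := by
  rw [commutatorElement_def]
  exact ((ha.mul_left hb).mul_left ha.inv_left).mul_left hb.inv_left

variable {X : Set G}
  (hmatch : ∀ x ∈ X, ∀ y ∈ X, ∀ z ∈ X, ¬Commute x y → ¬Commute x z → y = z)
include hmatch

theorem commute_commutatorElement_of_ne {a x y : G} (ha : a ∈ X) (hx : x ∈ X) (hy : y ∈ X)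
    (hax : a ≠ x) (hay : a ≠ y) : Commute a ⁅x, y⁆ := by
  by_cases hxy : Commute x y
  · rw [hxy.commutator_eq]
    exact Commute.one_right a
  refine (Commute.commutatorElement_left ?_ ?_).symm
  · by_contra hxa
    exact hay (hmatch x hx a ha y hy hxa hxy)
  · by_contra hya
    exact hax (hmatch y hy a ha x hx hya fun h => hxy h.symm)

theorem commute_commutatorElement_commutatorElement {x y u v : G} (hx : x ∈ X) (hy : y ∈ X)
    (hu : u ∈ X) (hv : v ∈ X) : Commute ⁅x, y⁆ ⁅u, v⁆ := by
  by_cases hxy : Commute x y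
  · rw [hxy.commutator_eq]
    exact Commute.one_left _
  by_cases huv : Commute u v
  · rw [huv.commutator_eq]
    exact Commute.one_right _
  have hyx : ¬Commute y x := fun h => hxy h.symm
  have hvu : ¬Commute v u := fun h => huv h.symm
  by_cases hux : u = x
  · subst hux
    obtain rfl := hmatch u hu v hv y hy huv hxy
    exact Commute.refl _
  by_cases huy : u = y
  · subst huy
    obtain rfl := hmatch u hu v hv x hx huv hyx
    rw [← commutatorElement_inv]
    exact (Commute.refl _).inv_left
  by_cases hvx : v = x
  · subst hvx
    obtain rfl := hmatch v hv u hu y hy hvu hxy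
    rw [← commutatorElement_inv]
    exact (Commute.refl _).inv_left
  by_cases hvy : v = y
  · subst hvy
    obtain rfl := hmatch v hv u hu x hx hvu hyx
    exact Commute.refl _
  exact (Commute.commutatorElement_left
    (commute_commutatorElement_of_ne hmatch hu hx hy hux huy)
    (commute_commutatorElement_of_ne hmatch hv hx hy hvx hvy)).symm

variable (hsq : ∀ x ∈ X, x ^ 2 = 1)
include hsq

theorem conj_commutatorElement_mem_image2 {a x y : G} (ha : a ∈ X) (hx : x ∈ X) (hy : y ∈ X) :
    a * ⁅x, y⁆ * a⁻¹ ∈ Set.image2 (⁅·, ·⁆) X X := by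
  by_cases hax : a = x
  · subst hax
    rw [conj_commutatorElement_left_of_sq_eq_one (hsq a ha)]
    exact Set.mem_image2_of_mem hy ha
  by_cases hay : a = y
  · subst hay
    rw [conj_commutatorElement_right_of_sq_eq_one x (hsq a ha)]
    exact Set.mem_image2_of_mem ha hx
  rw [(commute_commutatorElement_of_ne hmatch ha hx hy hax hay).mul_inv_cancel]
  exact Set.mem_image2_of_mem hx hy

theorem isMulCommutative_commutator_of_involutive_generators (hX : closure X = ⊤) :
    IsMulCommutative (commutator G) := by
  set S := Set.image2 (⁅·, ·⁆) X X
  have hS : IsMulCommutative (closure S) := by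
    refine isMulCommutative_closure ?_
    rintro _ ⟨x, hx, y, hy, rfl⟩ _ ⟨u, hu, v, hv, rfl⟩
    exact commute_commutatorElement_commutatorElement hmatch hx hy hu hv
  have : (closure S).Normal := by
    refine normal_closure_of_conj_mem hX (fun x hx => ?_) ?_
    · rwa [inv_eq_self_of_sq_eq_one (hsq x hx)]
    · rintro a ha _ ⟨x, hx, y, hy, rfl⟩
      exact subset_closure (conj_commutatorElement_mem_image2 hmatch hsq ha hx hy)
  have hle : commutator G ≤ closure S := commutator_le_of_closure_eq_top hX _
    fun x hx y hy => subset_closure (Set.mem_image2_of_mem hx hy)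
  exact .of_setLike_mul_comm fun a ha b hb => setLike_mul_comm (hle ha) (hle hb)

end InvolutiveGenerators

section RightAngledCoxeterGroup

variable {d : ℕ} {E : Fin d → Fin d → Prop}

theorem racgGen_sq (j : Fin d) : racgGen E j ^ 2 = 1 :=
  PresentedGroup.one_of_mem (Or.inl ⟨j, rfl⟩)

theorem commute_racgGen_of_adj {i j : Fin d} (h : E i j) :
    Commute (racgGen E i) (racgGen E j) :=
  commute_of_sq_eq_one (racgGen_sq i) (racgGen_sq j)
    (PresentedGroup.one_of_mem (Or.inr ⟨i, j, h, rfl⟩))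

theorem closure_range_racgGen : Subgroup.closure (Set.range (racgGen E)) = ⊤ :=
  PresentedGroup.closure_range_of _

def racgLift {G : Type*} [Group G] (f : Fin d → G) (hf : ∀ j, f j ^ 2 = 1)
    (hE : ∀ i j, E i j → Commute (f i) (f j)) : RACG E →* G :=
  PresentedGroup.toGroup (f := f) <| by
    rintro r (⟨j, rfl⟩ | ⟨i, j, h, rfl⟩)
    · simp [hf]
    · simp [(hE i j h).mul_pow, hf]

theorem racgLift_racgGen {G : Type*} [Group G] (f : Fin d → G) (hf : ∀ j, f j ^ 2 = 1)
    (hE : ∀ i j, E i j → Commute (f i) (f j)) (j : Fin d) :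
    racgLift f hf hE (racgGen E j) = f j :=
  PresentedGroup.toGroup.of _

theorem not_commute_commutatorElement_racgGen {i j k : Fin d} (hik : i ≠ k) (hij : i ≠ j)
    (hkj : k ≠ j) (hEij : ¬E i j) (hEji : ¬E j i) (hEkj : ¬E k j) (hEjk : ¬E j k) :
    ¬Commute ⁅racgGen E i, racgGen E j⁆ ⁅racgGen E k, racgGen E j⁆ := by
  let f : Fin d → Equiv.Perm (Fin 4) := fun v =>
    if v = i then Equiv.swap 2 3 else if v = k then Equiv.swap 0 1
    else if v = j then Equiv.swap 1 2 else 1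
  have hf : ∀ v, f v ^ 2 = 1 := by
    intro v
    simp only [f]
    split_ifs <;> decide
  have hE : ∀ a b, E a b → Commute (f a) (f b) := by
    intro a b h
    show f a * f b = f b * f a
    simp only [f]
    split_ifs <;> subst_vars <;> first | decide | contradiction
  intro h
  have := h.map (racgLift f hf hE)
  simp only [map_commutatorElement, racgLift_racgGen, f, if_pos, if_neg hik.symm,
    if_neg hij.symm, if_neg hkj.symm] at this
  exact absurd this.eq (by decide)

theorem racgGen_eq_of_not_commute
    (hone : ∀ j i k : Fin d, i ≠ j → k ≠ j → ¬E i j → ¬E k j → i = k) {i j k : Fin d}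
    (hij : ¬Commute (racgGen E i) (racgGen E j)) (hik : ¬Commute (racgGen E i) (racgGen E k)) :
    racgGen E j = racgGen E k := by
  have hne : ∀ {l}, ¬Commute (racgGen E i) (racgGen E l) → l ≠ i := by
    rintro l h rfl
    exact h (Commute.refl _)
  have hnadj : ∀ {l}, ¬Commute (racgGen E i) (racgGen E l) → ¬E l i :=
    fun h hE => h (commute_racgGen_of_adj hE).symm
  rw [hone i j k (hne hij) (hne hik) (hnadj hij) (hnadj hik)]

theorem isMulCommutative_commutator_racg
    (hone : ∀ j i k : Fin d, i ≠ j → k ≠ j → ¬E i j → ¬E k j → i = k) :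
    IsMulCommutative (commutator (RACG E)) := by
  refine isMulCommutative_commutator_of_involutive_generators (X := Set.range (racgGen E))
    ?_ ?_ closure_range_racgGen
  · rintro _ ⟨i, rfl⟩ _ ⟨j, rfl⟩ _ ⟨k, rfl⟩
    exact racgGen_eq_of_not_commute hone
  · rintro _ ⟨j, rfl⟩
    exact racgGen_sq j

end RightAngledCoxeterGroup

theorem stmt_4_general {d : ℕ} (E : Fin d → Fin d → Prop)
    (hsymm : ∀ i j, E i j → E j i) :
    (∀ x y : RACG E, x ∈ commutator (RACG E) → y ∈ commutator (RACG E) → x * y = y * x) ↔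
      (∀ j i k : Fin d, i ≠ j → k ≠ j → ¬ E i j → ¬ E k j → i = k) := by
  constructor
  · intro hcomm j i k hij hkj hEij hEkj
    by_contra hik
    refine not_commute_commutatorElement_racgGen hik hij hkj hEij (mt (hsymm j i) hEij) hEkj
      (mt (hsymm j k) hEkj) (hcomm _ _ ?_ ?_) <;>
    exact Subgroup.commutator_mem_commutator (Subgroup.mem_top _) (Subgroup.mem_top _)
  · intro hone x y hx hy
    have := isMulCommutative_commutator_racg hone
    exact setLike_mul_comm hx hy

/-- Lemma 4.1: the commutator subgroup `[W(E), W(E)]` is abelian if and only if every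
vertex of the graph `E` has at most one non-neighbour. -/
theorem stmt_4 {d : ℕ} (hd : 1 ≤ d) (E : Fin d → Fin d → Prop)
    (hsymm : ∀ i j, E i j → E j i) (hirr : ∀ i, ¬ E i i) :
    (∀ x y : RACG E, x ∈ commutator (RACG E) → y ∈ commutator (RACG E) → x * y = y * x) ↔
      (∀ j i k : Fin d, i ≠ j → k ≠ j → ¬ E i j → ¬ E k j → i = k) :=
  stmt_4_general E hsymm
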